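/- Adding one strip of length 1 and one strip of length 2 to any misère Partizan Kayles position consisting of k strips of length 1 and j strips of length 2 does not change its misère outcome: o⁻((k+1)S₁ + (j+1)S₂) = o⁻(kS₁ + jS₂) for all natural numbers k, j. -/

import Mathlib

/-- Add a strip of length `k` to a position (strips of length 0 are discarded). -/
def addStrip (m : Multiset ℕ) (k : ℕ) : Multiset ℕ := if k = 0 then m else k ::ₘ m

/-- Left removes one square from a strip of length `n ≥ 1`, leaving strips `i` and `n-1-i`. -/
def LeftMove (G G' : Multiset ℕ) : Prop :=
  ∃ n ∈ G, ∃ i, i + 1 ≤ n ∧ G' = addStrip (addStrip (G.erase n) i) (n - 1 - i)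

/-- Right removes two adjacent squares from a strip of length `n ≥ 2`, leaving `i` and `n-2-i`. -/
def RightMove (G G' : Multiset ℕ) : Prop :=
  ∃ n ∈ G, ∃ i, i + 2 ≤ n ∧ G' = addStrip (addStrip (G.erase n) i) (n - 2 - i)

mutual
  /-- Misère play: Left, to move, wins (a player unable to move wins). -/
  inductive LeftWinsMover : Multiset ℕ → Prop
    | cannot (G : Multiset ℕ) : (¬ ∃ G', LeftMove G G') → LeftWinsMover G
    | move (G G' : Multiset ℕ) : LeftMove G G' → LeftWinsWaiter G' → LeftWinsMover G
  /-- Misère play: Left wins with Right to move. -/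
  inductive LeftWinsWaiter : Multiset ℕ → Prop
    | intro (G : Multiset ℕ) : (∃ G', RightMove G G') →
        (∀ G', RightMove G G' → LeftWinsMover G') → LeftWinsWaiter G
end

inductive Outcome | L | N | P | R
  deriving DecidableEq

open Classical in
/-- The misère outcome `o⁻(G)`. -/
noncomputable def outcome (G : Multiset ℕ) : Outcome :=
  if LeftWinsMover G then (if LeftWinsWaiter G then Outcome.L else Outcome.N)
  else (if LeftWinsWaiter G then Outcome.P else Outcome.R)

/-- The partial order on outcomes: `L` greatest, `R` least, `N` and `P` incomparable. -/
def Outcome.le (a b : Outcome) : Prop := a = b ∨ a = Outcome.R ∨ b = Outcome.L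

/-- `pos k j` is the position `kS₁ + jS₂`. -/
def pos (k j : ℕ) : Multiset ℕ := Multiset.replicate k 1 + Multiset.replicate j 2


/-! In `kS₁ + jS₂` Left either deletes a strip `1` or shortens a `2` to a `1`, while Right can only
delete a `2`; every move lowers `k + 2j` by one. Induction on `k + 2j` shows that Left, moving
first, wins exactly when `k ≤ j` and `j ≡ k [MOD 3]`, and, moving second, exactly when
`k + 1 ≤ j` and `j ≡ k + 1 [MOD 3]`. Both conditions are unchanged by `(k, j) ↦ (k + 1, j + 1)`. -/

lemma outcome_congr {G H : Multiset ℕ} (hM : LeftWinsMover G ↔ LeftWinsMover H)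
    (hW : LeftWinsWaiter G ↔ LeftWinsWaiter H) : outcome G = outcome H := by
  classical
  simp only [outcome]
  exact if_congr hM (if_congr hW rfl rfl) (if_congr hW rfl rfl)

@[simp]
lemma addStrip_zero (m : Multiset ℕ) : addStrip m 0 = m := if_pos rfl

@[simp]
lemma addStrip_one (m : Multiset ℕ) : addStrip m 1 = 1 ::ₘ m := if_neg one_ne_zero

lemma pos_succ_left (k j : ℕ) : pos (k + 1) j = 1 ::ₘ pos k j := by
  simp [pos, Multiset.replicate_succ, Multiset.cons_add]

lemma pos_succ_right (k j : ℕ) : pos k (j + 1) = 2 ::ₘ pos k j := by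
  simp [pos, Multiset.replicate_succ, Multiset.add_cons]

lemma mem_pos {n k j : ℕ} : n ∈ pos k j ↔ n = 1 ∧ 0 < k ∨ n = 2 ∧ 0 < j := by
  simp only [pos, Multiset.mem_add, Multiset.mem_replicate]
  omega

lemma pos_succ_left_erase_one (k j : ℕ) : (pos (k + 1) j).erase 1 = pos k j := by
  rw [pos_succ_left, Multiset.erase_cons_head]

lemma pos_succ_right_erase_two (k j : ℕ) : (pos k (j + 1)).erase 2 = pos k j := by
  rw [pos_succ_right, Multiset.erase_cons_head]

lemma leftMove_pos_iff {k j : ℕ} {G' : Multiset ℕ} :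
    LeftMove (pos k j) G' ↔ 0 < k ∧ G' = pos (k - 1) j ∨ 0 < j ∧ G' = pos (k + 1) (j - 1) := by
  constructor
  · rintro ⟨n, hn, i, hi, rfl⟩
    rcases mem_pos.mp hn with ⟨rfl, hk⟩ | ⟨rfl, hj⟩
    · obtain ⟨k, rfl⟩ := Nat.exists_eq_add_one.mpr hk
      obtain rfl : i = 0 := by omega
      simp [pos_succ_left_erase_one]
    · obtain ⟨j, rfl⟩ := Nat.exists_eq_add_one.mpr hj
      obtain rfl | rfl : i = 0 ∨ i = 1 := by omega
      all_goals simp [pos_succ_right_erase_two, pos_succ_left]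
  · rintro (⟨hk, rfl⟩ | ⟨hj, rfl⟩)
    · obtain ⟨k, rfl⟩ := Nat.exists_eq_add_one.mpr hk
      exact ⟨1, mem_pos.mpr (.inl ⟨rfl, hk⟩), 0, le_rfl, by simp [pos_succ_left_erase_one]⟩
    · obtain ⟨j, rfl⟩ := Nat.exists_eq_add_one.mpr hj
      exact ⟨2, mem_pos.mpr (.inr ⟨rfl, hj⟩), 1, le_rfl,
        by simp [pos_succ_right_erase_two, pos_succ_left]⟩

lemma rightMove_pos_iff {k j : ℕ} {G' : Multiset ℕ} :
    RightMove (pos k j) G' ↔ 0 < j ∧ G' = pos k (j - 1) := by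
  constructor
  · rintro ⟨n, hn, i, hi, rfl⟩
    rcases mem_pos.mp hn with ⟨rfl, hk⟩ | ⟨rfl, hj⟩
    · omega
    · obtain ⟨j, rfl⟩ := Nat.exists_eq_add_one.mpr hj
      obtain rfl : i = 0 := by omega
      simp [pos_succ_right_erase_two]
  · rintro ⟨hj, rfl⟩
    obtain ⟨j, rfl⟩ := Nat.exists_eq_add_one.mpr hj
    exact ⟨2, mem_pos.mpr (.inr ⟨rfl, hj⟩), 0, le_rfl, by simp [pos_succ_right_erase_two]⟩

lemma exists_leftMove_pos_iff {k j : ℕ} : (∃ G', LeftMove (pos k j) G') ↔ 0 < k ∨ 0 < j := by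
  simp only [leftMove_pos_iff]
  constructor
  · rintro ⟨_, ⟨hk, -⟩ | ⟨hj, -⟩⟩ <;> omega
  · rintro (hk | hj)
    exacts [⟨_, .inl ⟨hk, rfl⟩⟩, ⟨_, .inr ⟨hj, rfl⟩⟩]

mutual

theorem leftWinsMover_pos_iff (k j : ℕ) :
    LeftWinsMover (pos k j) ↔ k ≤ j ∧ j ≡ k [MOD 3] := by
  constructor
  · rintro (⟨_, hstuck⟩ | ⟨_, G', hmove, hwait⟩)
    · rw [exists_leftMove_pos_iff] at hstuck
      unfold Nat.ModEq
      omega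
    · rcases leftMove_pos_iff.mp hmove with ⟨hk, rfl⟩ | ⟨hj, rfl⟩
      · have := (leftWinsWaiter_pos_iff (k - 1) j).mp hwait
        unfold Nat.ModEq at *
        omega
      · have := (leftWinsWaiter_pos_iff (k + 1) (j - 1)).mp hwait
        unfold Nat.ModEq at *
        omega
  · intro h
    unfold Nat.ModEq at h
    by_cases hk : 0 < k
    · refine .move _ _ (leftMove_pos_iff.mpr (.inl ⟨hk, rfl⟩)) ?_
      refine (leftWinsWaiter_pos_iff (k - 1) j).mpr ?_
      unfold Nat.ModEq
      omega
    by_cases hj : 0 < j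
    · -- with no strip `1` left, `j ≡ 0 [MOD 3]` forces `j ≥ 3`, and Left shortens a `2`
      refine .move _ _ (leftMove_pos_iff.mpr (.inr ⟨hj, rfl⟩)) ?_
      refine (leftWinsWaiter_pos_iff (k + 1) (j - 1)).mpr ?_
      unfold Nat.ModEq
      omega
    exact .cannot _ (by rw [exists_leftMove_pos_iff]; omega)
termination_by k + 2 * j

theorem leftWinsWaiter_pos_iff (k j : ℕ) :
    LeftWinsWaiter (pos k j) ↔ k + 1 ≤ j ∧ j ≡ k + 1 [MOD 3] := by
  constructor
  · rintro ⟨_, ⟨G', hG'⟩, hwin⟩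
    obtain ⟨hj, rfl⟩ := rightMove_pos_iff.mp hG'
    have := (leftWinsMover_pos_iff k (j - 1)).mp (hwin _ hG')
    unfold Nat.ModEq at *
    omega
  · intro h
    have hj : 0 < j := by omega
    refine .intro _ ⟨_, rightMove_pos_iff.mpr ⟨hj, rfl⟩⟩ fun G' hG' => ?_
    obtain ⟨-, rfl⟩ := rightMove_pos_iff.mp hG'
    refine (leftWinsMover_pos_iff k (j - 1)).mpr ?_
    unfold Nat.ModEq at *
    omega
termination_by k + 2 * j

end

theorem kayles_add_one_one_two (k j : ℕ) :
    outcome (pos (k + 1) (j + 1)) = outcome (pos k j) := by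
  apply outcome_congr
  · rw [leftWinsMover_pos_iff, leftWinsMover_pos_iff]
    unfold Nat.ModEq
    omega
  · rw [leftWinsWaiter_pos_iff, leftWinsWaiter_pos_iff]
    unfold Nat.ModEq
    omega
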